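/- arXiv:1106.2310 — 7 statements merged into one kernel-verified Lean document; each statement's English description precedes it below -/
import Mathlib

section
/- Let S be a ring with 1 and R a subring of S containing 1. Suppose x ∈ S is a unit such that x+1 is also a unit, and x⁻¹Rx = R and (x+1)⁻¹R(x+1) = R. Then either (x+1)⁻¹ ∈ R, or the set I = R ∩ (x+1)R is a proper two-sided ideal of R and x⁻¹ux - u ∈ I for all u ∈ R. -/
/-!
`I` is closed under left multiplication by `R` because `r (x+1) s = (x+1) ((x+1)⁻¹ r (x+1)) s`,
and `1 ∈ I` exactly when `(x+1)⁻¹ ∈ R`. The last claim rests on the identity `x⁻¹ w x - w = (x+1) (x⁻¹ w x - (x+1)⁻¹ w (x+1))`,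
whose right-hand factor is a difference of two conjugates of `w`, hence lies in `R`.
-/

/-- The set `R ∩ (x+1)R` inside the ambient ring `S`. -/
def subringLemmaIdeal {S : Type*} [Ring S] (R : Subring S) (x : S) : Set S :=
  {r : S | r ∈ R ∧ ∃ s ∈ R, r = (x + 1) * s}

theorem Units.inv_mul_mul_sub_eq_mul_sub {S : Type*} [Ring S] (u v : Sˣ)
    (huv : (v : S) = u + 1) (w : S) :
    ↑u⁻¹ * w * u - w = v * (↑u⁻¹ * w * u - ↑v⁻¹ * w * v) := by
  rw [mul_sub, mul_assoc (↑v⁻¹ : S), Units.mul_inv_cancel_left, huv]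
  simp only [add_mul, mul_add, one_mul, mul_one, ← mul_assoc, Units.mul_inv]
  abel

section

variable {S : Type*} [Ring S] (R : Subring S) (x : S)

theorem zero_mem_subringLemmaIdeal : (0 : S) ∈ subringLemmaIdeal R x :=
  ⟨R.zero_mem, 0, R.zero_mem, (mul_zero _).symm⟩

variable {R x}

theorem add_mem_subringLemmaIdeal {a b : S} (ha : a ∈ subringLemmaIdeal R x)
    (hb : b ∈ subringLemmaIdeal R x) : a + b ∈ subringLemmaIdeal R x := by
  obtain ⟨haR, s, hs, rfl⟩ := ha
  obtain ⟨hbR, t, ht, rfl⟩ := hb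
  exact ⟨R.add_mem haR hbR, s + t, R.add_mem hs ht, (mul_add _ _ _).symm⟩

theorem neg_mem_subringLemmaIdeal {a : S} (ha : a ∈ subringLemmaIdeal R x) :
    -a ∈ subringLemmaIdeal R x := by
  obtain ⟨haR, s, hs, rfl⟩ := ha
  exact ⟨R.neg_mem haR, -s, R.neg_mem hs, (mul_neg _ _).symm⟩

theorem mul_mem_subringLemmaIdeal_right {a r : S} (ha : a ∈ subringLemmaIdeal R x) (hr : r ∈ R) :
    a * r ∈ subringLemmaIdeal R x := by
  obtain ⟨haR, s, hs, rfl⟩ := ha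
  exact ⟨R.mul_mem haR hr, s * r, R.mul_mem hs hr, mul_assoc _ _ _⟩

variable {v : Sˣ} (hv : (v : S) = x + 1)
include hv

theorem mul_mem_subringLemmaIdeal_left (hconj : ∀ r ∈ R, ↑v⁻¹ * r * v ∈ R) {a r : S}
    (ha : a ∈ subringLemmaIdeal R x) (hr : r ∈ R) : r * a ∈ subringLemmaIdeal R x := by
  obtain ⟨haR, s, hs, rfl⟩ := ha
  refine ⟨R.mul_mem hr haR, ↑v⁻¹ * r * v * s, R.mul_mem (hconj r hr) hs, ?_⟩
  rw [← hv]
  simp only [mul_assoc, Units.mul_inv_cancel_left]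

theorem one_mem_subringLemmaIdeal_iff : (1 : S) ∈ subringLemmaIdeal R x ↔ ↑v⁻¹ ∈ R := by
  refine ⟨fun ⟨_, s, hs, h⟩ => ?_, fun h => ⟨R.one_mem, ↑v⁻¹, h, by rw [← hv, Units.mul_inv]⟩⟩
  rw [← hv] at h
  rwa [Units.inv_eq_of_mul_eq_one_right h.symm]

end

theorem conj_sub_mem_subringLemmaIdeal {S : Type*} [Ring S] {R : Subring S} {u v : Sˣ}
    (huv : (v : S) = u + 1) (hconju : ∀ r ∈ R, ↑u⁻¹ * r * u ∈ R)
    (hconjv : ∀ r ∈ R, ↑v⁻¹ * r * v ∈ R) {w : S} (hw : w ∈ R) :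
    ↑u⁻¹ * w * u - w ∈ subringLemmaIdeal R u :=
  ⟨R.sub_mem (hconju w hw) hw, _, R.sub_mem (hconju w hw) (hconjv w hw),
    huv ▸ u.inv_mul_mul_sub_eq_mul_sub v huv w⟩

/-- Subring lemma: if `x` and `x+1` are units normalizing a subring `R`, then either
`(x+1)⁻¹ ∈ R`, or `I = R ∩ (x+1)R` is a proper two-sided ideal of `R` with
`x⁻¹ u x - u ∈ I` for all `u ∈ R`. -/
theorem stmt0 {S : Type*} [Ring S] (R : Subring S) (u v : Sˣ)
    (huv : (v : S) = (u : S) + 1)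
    (hconjx : (fun s : S => (↑u⁻¹ : S) * s * (u : S)) '' (R : Set S) = (R : Set S))
    (hconjx1 : (fun s : S => (↑v⁻¹ : S) * s * (v : S)) '' (R : Set S) = (R : Set S)) :
    (↑v⁻¹ : S) ∈ R ∨
      (subringLemmaIdeal R (u : S) ≠ (R : Set S) ∧
        (0 : S) ∈ subringLemmaIdeal R (u : S) ∧
        (∀ a ∈ subringLemmaIdeal R (u : S), ∀ b ∈ subringLemmaIdeal R (u : S),
          a + b ∈ subringLemmaIdeal R (u : S)) ∧
        (∀ a ∈ subringLemmaIdeal R (u : S), -a ∈ subringLemmaIdeal R (u : S)) ∧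
        (∀ r ∈ R, ∀ a ∈ subringLemmaIdeal R (u : S),
          r * a ∈ subringLemmaIdeal R (u : S) ∧ a * r ∈ subringLemmaIdeal R (u : S)) ∧
        (∀ w ∈ R, (↑u⁻¹ : S) * w * (u : S) - w ∈ subringLemmaIdeal R (u : S))) := by
  have hconju : ∀ r ∈ R, ↑u⁻¹ * r * u ∈ R := fun r hr => hconjx.subset ⟨r, hr, rfl⟩
  have hconjv : ∀ r ∈ R, ↑v⁻¹ * r * v ∈ R := fun r hr => hconjx1.subset ⟨r, hr, rfl⟩
  by_cases hv : ↑v⁻¹ ∈ R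
  · exact Or.inl hv
  refine Or.inr ⟨fun hI => hv ((one_mem_subringLemmaIdeal_iff huv).1 (hI ▸ R.one_mem)),
    zero_mem_subringLemmaIdeal R _, fun _ ha _ hb => add_mem_subringLemmaIdeal ha hb,
    fun _ ha => neg_mem_subringLemmaIdeal ha, fun _ hr _ ha => ⟨?_, ?_⟩,
    fun _ hw => conj_sub_mem_subringLemmaIdeal huv hconju hconjv hw⟩
  · exact mul_mem_subringLemmaIdeal_left huv hconjv ha hr
  · exact mul_mem_subringLemmaIdeal_right ha hr
end

section
/- Let S be a unital ring and R a subring of S with 1 ∈ R, and suppose x ∈ S is a unit such that x+1 is a unit, x⁻¹Rx = R and (x+1)⁻¹R(x+1) = R. If additionally R is a division ring and x+1 does not have its inverse in R, then x centralizes R, i.e. xu = ux for all u ∈ R. -/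
/-!
Put `a = u⁻¹ r u` and `b = v⁻¹ r v`, both in `R`. From `u a = r u`, `v b = r v` and `v = u + 1`
one gets `u (a - b) = b - r`. If `a ≠ b`, then `a - b` is invertible in `R`, so `u ∈ R`,
hence `v ∈ R` and `v⁻¹ ∈ R`, which is excluded. So `a = b`, then `b = r`, and `u⁻¹ r u = r`.
-/

namespace Subring

variable {S : Type*} [Ring S] (R : Subring S)

theorem units_inv_mul_mul_mem {u : Sˣ}
    (hu : (fun s : S => (↑u⁻¹ : S) * s * (u : S)) '' (R : Set S) = (R : Set S))
    {r : S} (hr : r ∈ R) : (↑u⁻¹ : S) * r * u ∈ R := by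
  rw [← SetLike.mem_coe, ← hu]
  exact Set.mem_image_of_mem _ hr

variable {R} (hdiv : ∀ r ∈ R, r ≠ 0 → ∃ s ∈ R, r * s = 1 ∧ s * r = 1)
include hdiv

theorem mem_of_mul_mem_right {x c : S} (hc : c ∈ R) (hc0 : c ≠ 0) (hxc : x * c ∈ R) : x ∈ R := by
  obtain ⟨s, hs, hcs, -⟩ := hdiv c hc hc0
  rw [← mul_one x, ← hcs, ← mul_assoc]
  exact R.mul_mem hxc hs

theorem units_inv_mem {v : Sˣ} (hv : (v : S) ∈ R) : (↑v⁻¹ : S) ∈ R := by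
  cases subsingleton_or_nontrivial S
  · exact Subsingleton.elim (0 : S) (↑v⁻¹ : S) ▸ R.zero_mem
  · obtain ⟨t, ht, hvt, -⟩ := hdiv v hv v.ne_zero
    exact Units.inv_eq_of_mul_eq_one_right hvt ▸ ht

end Subring

theorem Units.mul_sub_conj_of_coe_eq_add_one {S : Type*} [Ring S] {u v : Sˣ}
    (huv : (v : S) = u + 1) (r : S) :
    (u : S) * (↑u⁻¹ * r * u - ↑v⁻¹ * r * v) = ↑v⁻¹ * r * v - r := by
  have hu : (u : S) = v - 1 := by rw [huv]; abel
  rw [mul_sub, mul_assoc, Units.mul_inv_cancel_left]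
  nth_rw 2 [hu]
  rw [sub_mul, mul_assoc, Units.mul_inv_cancel_left, hu]
  noncomm_ring

/-- Special case of the subring lemma: if `R` is a division subring of `S`, `x` and `x+1`
are units of `S` normalizing `R`, and `(x+1)⁻¹ ∉ R`, then `x` centralizes `R`. -/
theorem stmt1 {S : Type*} [Ring S] (R : Subring S) (u v : Sˣ)
    (huv : (v : S) = (u : S) + 1)
    (hconjx : (fun s : S => (↑u⁻¹ : S) * s * (u : S)) '' (R : Set S) = (R : Set S))
    (hconjx1 : (fun s : S => (↑v⁻¹ : S) * s * (v : S)) '' (R : Set S) = (R : Set S))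
    (hdiv : ∀ r ∈ R, r ≠ 0 → ∃ s ∈ R, r * s = 1 ∧ s * r = 1)
    (hnot : (↑v⁻¹ : S) ∉ R) :
    ∀ r ∈ R, (u : S) * r = r * (u : S) := by
  intro r hr
  have ha := R.units_inv_mul_mul_mem hconjx hr
  have hb := R.units_inv_mul_mul_mem hconjx1 hr
  have key := Units.mul_sub_conj_of_coe_eq_add_one huv r
  obtain hab | hab := eq_or_ne (↑u⁻¹ * r * u) (↑v⁻¹ * r * v)
  · rw [hab, sub_self, mul_zero, eq_comm, sub_eq_zero, ← hab, mul_assoc,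
      Units.inv_mul_eq_iff_eq_mul] at key
    exact key.symm
  · have huR : (u : S) ∈ R :=
      Subring.mem_of_mul_mem_right hdiv (R.sub_mem ha hb) (sub_ne_zero.2 hab)
        (key ▸ R.sub_mem hb hr)
    have hvR : (v : S) ∈ R := huv ▸ R.add_mem huR R.one_mem
    exact absurd (Subring.units_inv_mem hdiv hvR) hnot
end

section
/- In the setting of the pseudo-quadratic form π(r,x,s) = s*r + π̄(x) + K₀ on V = K ⊕ V̄ ⊕ K, for v ∈ V̄ and t ∈ K with π̄(v) − t ∈ K₀, define α_{(v,t)} ∈ End(V) by (r,x,s)α_{(v,t)} = (r − f(v,x) + t*s, x + vs, s). Then α_{(v,t)} is an invertible K-linear map preserving π (i.e. π((r,x,s)α_{(v,t)}) = π(r,x,s) for all (r,x,s)), and α_{(v,t)}α_{(w,u)} = α_{(v+w, t+u+f(v,w))}. -/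
/-!
Each claim is a direct computation. Additivity, semilinearity and the composition law only use
the sesquilinearity of `f`, and skew-symmetry turns the cross term `f(w, vs)` into the correction
`f(v,w)* s`. Bijectivity needs no property of `f`: the inverse undoes the three coordinate changes
in reverse order. Finally `π((r,x,s)α) − π(r,x,s)` is, modulo `K₀`, equal to
`s* (ρ(v) − t + t + t*) s`, and every trace `a + a*` lies in `K₀` because
`a + a* = (a + 1)*(a + 1) − a* a − 1* 1`.
-/

open MulOpposite

theorem AddSubgroup.add_star_mem_of_star_mul_self_mem {K : Type*} [Ring K] [StarRing K]
    (K0 : AddSubgroup K) (hnorm : ∀ x : K, star x * x ∈ K0) (x : K) : x + star x ∈ K0 := by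
  have h := K0.sub_mem (K0.sub_mem (hnorm (x + 1)) (hnorm x)) (hnorm 1)
  have htrace : star (x + 1) * (x + 1) - star x * x - star 1 * 1 = x + star x := by
    simp only [star_add, star_one, add_mul, mul_add, mul_one, one_mul]
    abel
  rwa [htrace] at h

section RootMap

variable {K W : Type*} [Ring K] [StarRing K] [AddCommGroup W] [Module Kᵐᵒᵖ W]

/-- The paper's `π`, as a `K`-valued map before reduction modulo `K₀`. -/
def pqForm (ρ : W → K) (p : K × W × K) : K :=
  star p.2.2 * p.1 + ρ p.2.1

/-- The map `α_{(v,t)}`; the paper writes maps on the right, so its `p α_{(v,t)} α_{(w,u)}` is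
`rootMap f w u (rootMap f v t p)`. -/
def rootMap (f : W → W → K) (v : W) (t : K) (p : K × W × K) : K × W × K :=
  (p.1 - f v p.2.1 + star t * p.2.2, p.2.1 + op p.2.2 • v, p.2.2)

theorem rootMap_add (f : W → W → K) (hf_addr : ∀ x y z : W, f x (y + z) = f x y + f x z)
    (v : W) (t : K) (p q : K × W × K) :
    rootMap f v t (p + q) = rootMap f v t p + rootMap f v t q := by
  obtain ⟨r, x, s⟩ := p
  obtain ⟨r', x', s'⟩ := q
  simp only [rootMap, Prod.mk_add_mk, hf_addr, op_add, add_smul, mul_add, Prod.mk.injEq, and_true]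
  constructor <;> abel

theorem rootMap_op_smul (f : W → W → K)
    (hf_sr : ∀ (lam : K) (x y : W), f x (op lam • y) = f x y * lam)
    (v : W) (t lam : K) (p : K × W × K) :
    rootMap f v t (op lam • p) = op lam • rootMap f v t p := by
  obtain ⟨r, x, s⟩ := p
  simp only [rootMap, Prod.smul_mk, op_smul_eq_mul, hf_sr, op_mul, mul_smul, smul_add, mul_assoc,
    sub_mul]

theorem rootMap_bijective (f : W → W → K) (v : W) (t : K) :
    Function.Bijective (rootMap f v t) := by
  refine Function.bijective_iff_has_inverse.mpr
    ⟨fun p => (p.1 + f v (p.2.1 - op p.2.2 • v) - star t * p.2.2,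
        p.2.1 - op p.2.2 • v, p.2.2),
      fun p => ?_, fun p => ?_⟩ <;>
  refine Prod.ext ?_ (Prod.ext ?_ rfl) <;>
  simp only [rootMap, add_sub_cancel_right, sub_add_cancel] <;>
  abel

theorem rootMap_rootMap (f : W → W → K)
    (hf_addl : ∀ x y z : W, f (x + y) z = f x z + f y z)
    (hf_addr : ∀ x y z : W, f x (y + z) = f x y + f x z)
    (hf_sr : ∀ (lam : K) (x y : W), f x (op lam • y) = f x y * lam)
    (hf_skew : ∀ x y : W, star (f x y) = - f y x)
    (v : W) (t : K) (w : W) (u : K) (p : K × W × K) :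
    rootMap f w u (rootMap f v t p) = rootMap f (v + w) (t + u + f v w) p := by
  obtain ⟨r, x, s⟩ := p
  simp only [rootMap, smul_add, hf_addl, hf_addr, hf_sr, star_add, hf_skew v w, Prod.mk.injEq,
    and_true]
  constructor
  · noncomm_ring
  · abel

theorem pqForm_rootMap_sub_mem (K0 : AddSubgroup K) (h1 : (1 : K) ∈ K0)
    (hamp : ∀ x : K, ∀ a ∈ K0, star x * a * x ∈ K0)
    (ρ : W → K) (f : W → W → K)
    (hf_sr : ∀ (lam : K) (x y : W), f x (op lam • y) = f x y * lam)
    (hf_skew : ∀ x y : W, star (f x y) = - f y x)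
    (hρ_sc : ∀ (lam : K) (x : W), ρ (op lam • x) - star lam * ρ x * lam ∈ K0)
    (hρ_add : ∀ x y : W, ρ (x + y) - ρ x - ρ y - f x y ∈ K0)
    {v : W} {t : K} (hvt : ρ v - t ∈ K0) (p : K × W × K) :
    pqForm ρ (rootMap f v t p) - pqForm ρ p ∈ K0 := by
  obtain ⟨r, x, s⟩ := p
  have htrace := K0.add_star_mem_of_star_mul_self_mem fun y => by simpa using hamp y 1 h1
  have hdecomp : pqForm ρ (rootMap f v t (r, x, s)) - pqForm ρ (r, x, s) =
      (ρ (x + op s • v) - ρ x - ρ (op s • v) - f x (op s • v))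
      + (ρ (op s • v) - star s * ρ v * s)
      - (star s * f v x + star (star s * f v x))
      + star s * ((ρ v - t) + (t + star t)) * s := by
    simp only [pqForm, rootMap, hf_sr, star_mul, star_star, hf_skew]
    noncomm_ring
  rw [hdecomp]
  exact K0.add_mem (K0.sub_mem (K0.add_mem (hρ_add x _) (hρ_sc s v)) (htrace _))
    (hamp s _ (K0.add_mem hvt (htrace t)))

end RootMap

theorem stmt9_general {K : Type*} [DivisionRing K] [StarRing K]
    (K0 : AddSubgroup K) (h1 : (1 : K) ∈ K0)
    (hamp : ∀ x : K, ∀ a ∈ K0, star x * a * x ∈ K0)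
    {W : Type*} [AddCommGroup W] [Module Kᵐᵒᵖ W]
    (ρ : W → K) (f : W → W → K)
    (hf_addl : ∀ x y z : W, f (x + y) z = f x z + f y z)
    (hf_addr : ∀ x y z : W, f x (y + z) = f x y + f x z)
    (hf_sr : ∀ (lam : K) (x y : W), f x (op lam • y) = f x y * lam)
    (hf_skew : ∀ x y : W, star (f x y) = - f y x)
    (hρ_sc : ∀ (lam : K) (x : W), ρ (op lam • x) - star lam * ρ x * lam ∈ K0)
    (hρ_add : ∀ x y : W, ρ (x + y) - ρ x - ρ y - f x y ∈ K0)
    (π : K × W × K → K) (hπ : π = fun p => star p.2.2 * p.1 + ρ p.2.1)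
    (α : W → K → (K × W × K) → (K × W × K))
    (hα : α = fun v t p => (p.1 - f v p.2.1 + star t * p.2.2, p.2.1 + op p.2.2 • v, p.2.2))
    (v : W) (t : K) (hvt : ρ v - t ∈ K0)
    (w : W) (u : K) :
    (∀ p q : K × W × K, α v t (p + q) = α v t p + α v t q) ∧
    (∀ (lam : K) (p : K × W × K), α v t (op lam • p) = op lam • α v t p) ∧
    Function.Bijective (α v t) ∧
    (∀ p : K × W × K, π (α v t p) - π p ∈ K0) ∧
    (∀ p : K × W × K, α w u (α v t p) = α (v + w) (t + u + f v w) p) := by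
  obtain rfl : π = pqForm ρ := hπ
  obtain rfl : α = rootMap f := hα
  exact ⟨rootMap_add f hf_addr v t, fun lam => rootMap_op_smul f hf_sr v t lam,
    rootMap_bijective f v t,
    pqForm_rootMap_sub_mem K0 h1 hamp ρ f hf_sr hf_skew hρ_sc hρ_add hvt,
    rootMap_rootMap f hf_addl hf_addr hf_sr hf_skew v t w u⟩

/-- In the setting of the pseudo-quadratic form `π(r,x,s) = s* r + ρ(x) + K₀` on
`V = K ⊕ W ⊕ K`, for `v ∈ W` and `t ∈ K` with `ρ(v) − t ∈ K₀` the map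
`α_{(v,t)} : (r,x,s) ↦ (r − f(v,x) + t* s, x + vs, s)` is an invertible `K`-linear
(right-linear) map preserving `π` modulo `K₀`, and `α_{(v,t)} α_{(w,u)} = α_{(v+w, t+u+f(v,w))}`. -/
theorem stmt9 {K : Type*} [DivisionRing K] [StarRing K]
    (K0 : AddSubgroup K) (h1 : (1 : K) ∈ K0) (hsym : ∀ a ∈ K0, star a = a)
    (hamp : ∀ x : K, ∀ a ∈ K0, star x * a * x ∈ K0)
    {W : Type*} [AddCommGroup W] [Module Kᵐᵒᵖ W]
    (ρ : W → K) (f : W → W → K)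
    (hf_addl : ∀ x y z : W, f (x + y) z = f x z + f y z)
    (hf_addr : ∀ x y z : W, f x (y + z) = f x y + f x z)
    (hf_sl : ∀ (lam : K) (x y : W), f (op lam • x) y = star lam * f x y)
    (hf_sr : ∀ (lam : K) (x y : W), f x (op lam • y) = f x y * lam)
    (hf_skew : ∀ x y : W, star (f x y) = - f y x)
    (hρ_sc : ∀ (lam : K) (x : W), ρ (op lam • x) - star lam * ρ x * lam ∈ K0)
    (hρ_add : ∀ x y : W, ρ (x + y) - ρ x - ρ y - f x y ∈ K0)
    (haniso : ∀ x : W, ρ x ∈ K0 → x = 0)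
    (π : K × W × K → K) (hπ : π = fun p => star p.2.2 * p.1 + ρ p.2.1)
    (α : W → K → (K × W × K) → (K × W × K))
    (hα : α = fun v t p => (p.1 - f v p.2.1 + star t * p.2.2, p.2.1 + op p.2.2 • v, p.2.2))
    (v : W) (t : K) (hvt : ρ v - t ∈ K0)
    (w : W) (u : K) (hwu : ρ w - u ∈ K0) :
    (∀ p q : K × W × K, α v t (p + q) = α v t p + α v t q) ∧
    (∀ (lam : K) (p : K × W × K), α v t (op lam • p) = op lam • α v t p) ∧
    Function.Bijective (α v t) ∧
    (∀ p : K × W × K, π (α v t p) - π p ∈ K0) ∧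
    (∀ p : K × W × K, α w u (α v t p) = α (v + w) (t + u + f v w) p) :=
  stmt9_general K0 h1 hamp ρ f hf_addl hf_addr hf_sr hf_skew hρ_sc hρ_add π hπ α hα v t hvt w u
end

section
/- Let A be a group acting on an abelian group V with [V,A,A,A] = 0, and set A₀ = C_A([V,A]) ∩ C_A(V/C_V(A)). Then the commutator subgroup A' is contained in A₀, and A₀ is contained in the center Z(A) provided A acts faithfully on V. -/
/-!
Everything rests on the identity `a • b • v - b • a • v = [v,b,a] - [v,a,b]`. For `w ∈ [V,A]`
both terms vanish by cubicity, so `A` acts commutatively on `[V,A]` and commutators centralize it.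
For arbitrary `v`, writing `v = b • a • p`, the displacement `⁅a,b⁆ • v - v` is such a difference
at `p`, and `[V,A,A] ⊆ C_V(A)`. Finally, for `a ∈ A₀` both terms vanish outright, so `ab` and `ba`
act alike, and faithfulness gives `ab = ba`.
-/

variable {A V : Type*} [Group A] [AddCommGroup V] [DistribMulAction A V]

/-- The subgroup `[V,A]` generated by all commutators `a • v − v`. -/
def commSubgroup (A V : Type*) [Group A] [AddCommGroup V] [DistribMulAction A V] :
    AddSubgroup V :=
  AddSubgroup.closure {x : V | ∃ (a : A) (v : V), x = a • v - v}

/-- The fixed points `C_V(A)`. -/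
def fixedSet (A V : Type*) [Group A] [AddCommGroup V] [DistribMulAction A V] : Set V :=
  {v : V | ∀ a : A, a • v = v}

/-- `A₀ = C_A([V,A]) ∩ C_A(V/C_V(A))`. -/
def A0set (A V : Type*) [Group A] [AddCommGroup V] [DistribMulAction A V] : Set A :=
  {a : A | (∀ w ∈ commSubgroup A V, a • w = w) ∧ ∀ v : V, a • v - v ∈ fixedSet A V}

open scoped commutatorElement

/-- The commutator `[v, a] = a • v - v` as an additive endomorphism of `V`. -/
def actComm (a : A) : V →+ V :=
  AddMonoidHom.mk' (fun v => a • v - v) fun v w => by simp only [smul_add]; abel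

@[simp]
lemma actComm_apply (a : A) (v : V) : actComm a v = a • v - v := rfl

def CubicAction (A V : Type*) [Group A] [AddCommGroup V] [DistribMulAction A V] : Prop :=
  ∀ (a b c : A) (v : V), actComm a (actComm b (actComm c v)) = 0

lemma smul_smul_sub_smul_smul (a b : A) (v : V) :
    a • b • v - b • a • v = actComm a (actComm b v) - actComm b (actComm a v) := by
  simp only [actComm_apply, smul_sub]
  abel

lemma eq_of_forall_smul_eq (hfaith : ∀ a : A, (∀ v : V, a • v = v) → a = 1) {a b : A}
    (h : ∀ v : V, a • v = b • v) : a = b :=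
  inv_mul_eq_one.mp <| hfaith _ fun v => by rw [mul_smul, ← h, inv_smul_smul]

namespace CubicAction

variable (h : CubicAction A V)
include h

lemma actComm_actComm_eq_zero_of_mem_commSubgroup (a b : A) {w : V}
    (hw : w ∈ commSubgroup A V) : actComm a (actComm b w) = 0 :=
  (AddSubgroup.closure_le (K := ((actComm a).comp (actComm b)).ker)).mpr
    (by rintro _ ⟨c, v, rfl⟩; exact h a b c v) hw

lemma actComm_actComm_mem_fixedSet (a b : A) (v : V) :
    actComm a (actComm b v) ∈ fixedSet A V :=
  fun c => sub_eq_zero.mp (h c a b v)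

lemma smul_comm_of_mem_commSubgroup (a b : A) {w : V} (hw : w ∈ commSubgroup A V) :
    a • b • w = b • a • w := by
  rw [← sub_eq_zero, smul_smul_sub_smul_smul, h.actComm_actComm_eq_zero_of_mem_commSubgroup a b hw,
    h.actComm_actComm_eq_zero_of_mem_commSubgroup b a hw, sub_zero]

lemma commutatorElement_smul_of_mem_commSubgroup (a b : A) {w : V}
    (hw : w ∈ commSubgroup A V) : ⁅a, b⁆ • w = w := by
  rw [commutatorElement_def, mul_smul, mul_smul, mul_smul,
    h.smul_comm_of_mem_commSubgroup a⁻¹ b⁻¹ hw, smul_inv_smul, smul_inv_smul]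

lemma commutatorElement_smul_sub_mem_fixedSet (a b : A) (v : V) :
    ⁅a, b⁆ • v - v ∈ fixedSet A V := by
  set p := a⁻¹ • b⁻¹ • v
  have hv : ⁅a, b⁆ • v - v = a • b • p - b • a • p := by
    simp only [p, commutatorElement_def, mul_smul, smul_inv_smul]
  intro c
  rw [hv, smul_smul_sub_smul_smul, smul_sub, h.actComm_actComm_mem_fixedSet a b p c,
    h.actComm_actComm_mem_fixedSet b a p c]

end CubicAction

lemma smul_comm_of_mem_A0set {a : A} (ha : a ∈ A0set A V) (b : A) (v : V) :
    a • b • v = b • a • v := by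
  have hab : actComm a (actComm b v) = 0 :=
    sub_eq_zero.mpr (ha.1 _ (AddSubgroup.subset_closure ⟨b, v, rfl⟩))
  have hba : actComm b (actComm a v) = 0 := sub_eq_zero.mpr (ha.2 v b)
  rw [← sub_eq_zero, smul_smul_sub_smul_smul, hab, hba, sub_zero]

/-- If `A` acts cubically on `V`, then `A' ⊆ A₀ := C_A([V,A]) ∩ C_A(V/C_V(A))`, and `A₀` is
contained in the center of `A` provided `A` acts faithfully on `V`. -/
theorem stmt12
    (hcubic : ∀ (a b c : A) (v : V),
      a • (b • (c • v - v) - (c • v - v)) - (b • (c • v - v) - (c • v - v)) = 0) :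
    (∀ a b : A, ⁅a, b⁆ ∈ A0set A V) ∧
      ((∀ a : A, (∀ v : V, a • v = v) → a = 1) →
        ∀ a ∈ A0set A V, ∀ b : A, a * b = b * a) := by
  have h : CubicAction A V := hcubic
  refine ⟨fun a b => ⟨fun w hw => h.commutatorElement_smul_of_mem_commSubgroup a b hw,
    h.commutatorElement_smul_sub_mem_fixedSet a b⟩, fun hfaith a ha b => ?_⟩
  exact eq_of_forall_smul_eq hfaith fun v => by rw [mul_smul, mul_smul, smul_comm_of_mem_A0set ha]
end

section
/- Let K be a division ring with involution * of characteristic 2 and let J be an ample hermitian subgroup of (K,*) such that J generates K as a ring. Define N_K(J) = {r ∈ K : r* J r ⊆ J}. If J ⊆ N_K(J) and r*r ∈ J, r + r* ∈ J for all r ∈ K, then N_K(J) is a subring of K containing J, and consequently N_K(J) = K, i.e. J is ample in K. -/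
/-!
For a fixed `j ∈ J`, the map `r ↦ r* j r` is multiplicative in the sense that
`(rs)* j (rs) = s* (r* j r) s`, and it is additive up to the cross term
`r* j s + s* j r = u + u*` with `u = r* j s` (here `j* = j` is used); such traces lie in `J`.
So the elements `r` with `r* J r ⊆ J` form a subring, and since it contains the generating set
`J` it is everything.
-/

namespace AddSubgroup

variable {R : Type*} [Ring R] [StarRing R] (J : AddSubgroup R)

def starNormalizer : Set R := {r | ∀ j ∈ J, star r * j * r ∈ J}

variable {J}

theorem one_mem_starNormalizer : (1 : R) ∈ J.starNormalizer := fun j hj => by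
  simpa using hj

theorem zero_mem_starNormalizer : (0 : R) ∈ J.starNormalizer := fun _ _ => by
  simp

theorem neg_mem_starNormalizer {r : R} (hr : r ∈ J.starNormalizer) :
    -r ∈ J.starNormalizer := fun j hj => by
  simpa using hr j hj

theorem mul_mem_starNormalizer {r s : R} (hr : r ∈ J.starNormalizer)
    (hs : s ∈ J.starNormalizer) : r * s ∈ J.starNormalizer := fun j hj => by
  simpa [mul_assoc] using hs _ (hr j hj)

theorem add_mem_starNormalizer (hsym : ∀ a ∈ J, star a = a) (htr : ∀ r : R, r + star r ∈ J)
    {r s : R} (hr : r ∈ J.starNormalizer) (hs : s ∈ J.starNormalizer) :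
    r + s ∈ J.starNormalizer := fun j hj => by
  have hcross : star s * j * r = star (star r * j * s) := by
    simp [mul_assoc, hsym j hj]
  have hexpand : star (r + s) * j * (r + s) =
      star r * j * r + star s * j * s + (star r * j * s + star s * j * r) := by
    simp only [star_add]; noncomm_ring
  rw [hexpand, hcross]
  exact J.add_mem (J.add_mem (hr j hj) (hs j hj)) (htr _)

variable (J)

def starNormalizerSubring (hsym : ∀ a ∈ J, star a = a) (htr : ∀ r : R, r + star r ∈ J) :
    Subring R where
  carrier := J.starNormalizer
  one_mem' := one_mem_starNormalizer
  zero_mem' := zero_mem_starNormalizer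
  neg_mem' := neg_mem_starNormalizer
  mul_mem' := mul_mem_starNormalizer
  add_mem' := add_mem_starNormalizer hsym htr

theorem starNormalizerSubring_eq_top (hsym : ∀ a ∈ J, star a = a)
    (htr : ∀ r : R, r + star r ∈ J) (hgen : Subring.closure (J : Set R) = ⊤)
    (hJN : (J : Set R) ⊆ J.starNormalizer) : J.starNormalizerSubring hsym htr = ⊤ :=
  top_le_iff.mp (hgen ▸ Subring.closure_le.mpr hJN)

end AddSubgroup

theorem stmt16_general {K : Type*} [DivisionRing K] [StarRing K]
    (J : AddSubgroup K) (hsym : ∀ a ∈ J, star a = a)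
    (hgen : Subring.closure (J : Set K) = ⊤)
    (N : Set K) (hN : N = {r : K | ∀ j ∈ J, star r * j * r ∈ J})
    (hJN : (J : Set K) ⊆ N)
    (htr : ∀ r : K, r + star r ∈ J) :
    (1 : K) ∈ N ∧ (∀ r ∈ N, ∀ s ∈ N, r * s ∈ N ∧ r + s ∈ N) ∧ (J : Set K) ⊆ N ∧
      N = Set.univ := by
  change N = J.starNormalizer at hN
  subst hN
  refine ⟨AddSubgroup.one_mem_starNormalizer, fun r hr s hs =>
    ⟨AddSubgroup.mul_mem_starNormalizer hr hs,
      AddSubgroup.add_mem_starNormalizer hsym htr hr hs⟩, hJN, ?_⟩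
  exact congrArg SetLike.coe (J.starNormalizerSubring_eq_top hsym htr hgen hJN)

/-- Let `K` be a division ring of characteristic 2 with involution `*` and `J` an ample
hermitian subgroup generating `K` as a ring. With `N = {r : r* J r ⊆ J}`, if `J ⊆ N` and
`r* r ∈ J`, `r + r* ∈ J` for all `r`, then `N` is a subring of `K` containing `J`, and
consequently `N = K`. -/
theorem stmt16 {K : Type*} [DivisionRing K] [StarRing K] (hchar : (2 : K) = 0)
    (J : AddSubgroup K) (h1 : (1 : K) ∈ J) (hsym : ∀ a ∈ J, star a = a)
    (hgen : Subring.closure (J : Set K) = ⊤)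
    (N : Set K) (hN : N = {r : K | ∀ j ∈ J, star r * j * r ∈ J})
    (hJN : (J : Set K) ⊆ N)
    (hsq : ∀ r : K, star r * r ∈ J)
    (htr : ∀ r : K, r + star r ∈ J) :
    (1 : K) ∈ N ∧ (∀ r ∈ N, ∀ s ∈ N, r * s ∈ N ∧ r + s ∈ N) ∧ (J : Set K) ⊆ N ∧
      N = Set.univ :=
  stmt16_general J hsym hgen N hN hJN htr
end

section
/- Let K be a division ring with involution *, and suppose x, y ∈ K satisfy: y⁻¹ c x = (y⁻¹ c x)* for all c in a subset J ⊆ {c : c* = c} with 1 ∈ J which generates K as a ring. Then yx* is a symmetric element commuting with every element of J, hence yx* lies in {z ∈ Z(K) : z* = z}. -/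
/-!
Unfolding the star, `(y⁻¹ c x)* = y⁻¹ c x` reads `x* c (y*)⁻¹ = y⁻¹ c x`; conjugating by `y`
gives `y x* c = c x y*` for every `c ∈ J`. At `c = 1` this says `y x* = x y* = (y x*)*`, and
substituting back, `y x*` commutes with every `c ∈ J`, hence with the ring `J` generates.
-/

theorem mul_star_mul_eq_mul_mul_star_of_star_eq {K : Type*} [DivisionRing K] [StarRing K]
    {c x y : K} (hc : star c = c) (hy : y ≠ 0)
    (hsymm : star (y⁻¹ * c * x) = y⁻¹ * c * x) :
    y * star x * c = c * x * star y := by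
  have hsy : star y ≠ 0 := star_ne_zero.mpr hy
  have hstar : star x * c * (star y)⁻¹ = y⁻¹ * c * x := by
    rw [← hsymm, star_mul, star_mul, hc, star_inv₀, mul_assoc]
  calc y * star x * c = y * (star x * c * (star y)⁻¹) * star y := by
        rw [mul_assoc y _ (star y), inv_mul_cancel_right₀ hsy, mul_assoc]
    _ = c * x * star y := by
        rw [hstar, ← mul_assoc, ← mul_assoc, mul_inv_cancel₀ hy, one_mul]

theorem Subring.commute_of_closure_eq_top {R : Type*} [Ring R] {J : Set R}
    (hgen : Subring.closure J = ⊤) {z : R} (hz : ∀ c ∈ J, z * c = c * z) (k : R) :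
    z * k = k * z := by
  have hle : Subring.closure J ≤ Subring.centralizer {z} := by
    rw [Subring.closure_le]
    rintro c hc _ rfl
    exact hz c hc
  exact Subring.mem_centralizer_iff.mp (hle (hgen ▸ Subring.mem_top k)) z rfl

/-- Let `K` be a division ring with involution `*`, and `J` a set of symmetric elements with
`1 ∈ J` generating `K` as a ring. If `x, y ∈ K` with `y ≠ 0` satisfy
`(y⁻¹ c x)* = y⁻¹ c x` for all `c ∈ J`, then `y x*` is symmetric, commutes with every
element of `J`, and hence lies in `{z ∈ Z(K) : z* = z}`. -/
theorem stmt17 {K : Type*} [DivisionRing K] [StarRing K]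
    (J : Set K) (hJ : ∀ c ∈ J, star c = c) (h1 : (1 : K) ∈ J)
    (hgen : Subring.closure J = ⊤)
    (x y : K) (hy : y ≠ 0)
    (hsymm : ∀ c ∈ J, star (y⁻¹ * c * x) = y⁻¹ * c * x) :
    star (y * star x) = y * star x ∧
      (∀ c ∈ J, (y * star x) * c = c * (y * star x)) ∧
      (∀ k : K, (y * star x) * k = k * (y * star x)) := by
  have key : ∀ c ∈ J, y * star x * c = c * x * star y := fun c hc =>
    mul_star_mul_eq_mul_mul_star_of_star_eq (hJ c hc) hy (hsymm c hc)
  have hone : y * star x = x * star y := by simpa using key 1 h1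
  have hcomm : ∀ c ∈ J, y * star x * c = c * (y * star x) := fun c hc => by
    rw [key c hc, hone, mul_assoc]
  refine ⟨?_, hcomm, Subring.commute_of_closure_eq_top hgen hcomm⟩
  rw [star_mul, star_star, hone]
end

section
/- Let K be a division ring with involution *, J = {x : x* = x} ample (containing all traces), V = K ⊕ W ⊕ K for a right K-vector space W with anisotropic pseudo-quadratic form ρ : W → K/J and skew-hermitian form f. Define on V = {[r,w,s]} the scalar action [r,w,s]∘λ = [rλ, wλ, sλ], and π([r,w,s]) = s*r + ρ(w) + J. Then for the map b acting by [r,w,s]b = [r − f(b₀,w) + t*s, w + b₀s, s] (with ρ(b₀) = t + J), π is b-invariant: π([r,w,s]b) = π([r,w,s]). -/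
/-! Expanding `ρ(w + b₀s) ≡ ρ(w) + s*ρ(b₀)s + f(w,b₀)s`, the difference `π(pβ) − π(p)` becomes
the trace `f(w,b₀)s + (f(w,b₀)s)*` plus `s*(t + t* + (ρ(b₀) − t))s`, and both lie in `J`. -/

open MulOpposite

section PseudoQuadratic

variable {K : Type*} [Ring K] [StarRing K] (J : AddSubgroup K)

theorem star_mul_star_add_mul_mem (hamp : ∀ x : K, ∀ a ∈ J, star x * a * x ∈ J)
    (htr : ∀ r : K, r + star r ∈ J) {a t : K} (hat : a - t ∈ J) (s : K) :
    star s * (star t + a) * s ∈ J := by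
  have h : star t + a = (t + star t) + (a - t) := by abel
  exact h ▸ hamp s _ (J.add_mem (htr t) hat)

theorem pseudoQuadratic_add_smul_sub_mem {W : Type*} [AddCommGroup W] [Module Kᵐᵒᵖ W]
    (ρ : W → K) (f : W → W → K)
    (hf_sr : ∀ (lam : K) (x y : W), f x (op lam • y) = f x y * lam)
    (hρ_sc : ∀ (lam : K) (x : W), ρ (op lam • x) - star lam * ρ x * lam ∈ J)
    (hρ_add : ∀ x y : W, ρ (x + y) - ρ x - ρ y - f x y ∈ J) (w b : W) (s : K) :
    ρ (w + op s • b) - ρ w - star s * ρ b * s - f w b * s ∈ J := by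
  have h := J.add_mem (hρ_add w (op s • b)) (hρ_sc s b)
  rw [hf_sr] at h
  convert h using 1
  abel

end PseudoQuadratic

theorem stmt19_general {K : Type*} [DivisionRing K] [StarRing K]
    (J : AddSubgroup K)
    (hamp : ∀ x : K, ∀ a ∈ J, star x * a * x ∈ J)
    (htr : ∀ r : K, r + star r ∈ J)
    {W : Type*} [AddCommGroup W] [Module Kᵐᵒᵖ W]
    (ρ : W → K) (f : W → W → K)
    (hf_sr : ∀ (lam : K) (x y : W), f x (op lam • y) = f x y * lam)
    (hf_skew : ∀ x y : W, star (f x y) = - f y x)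
    (hρ_sc : ∀ (lam : K) (x : W), ρ (op lam • x) - star lam * ρ x * lam ∈ J)
    (hρ_add : ∀ x y : W, ρ (x + y) - ρ x - ρ y - f x y ∈ J)
    (π : K × W × K → K) (hπ : π = fun p => star p.2.2 * p.1 + ρ p.2.1)
    (b0 : W) (t : K) (hb0 : ρ b0 - t ∈ J)
    (β : (K × W × K) → (K × W × K))
    (hβ : β = fun p => (p.1 - f b0 p.2.1 + star t * p.2.2, p.2.1 + op p.2.2 • b0, p.2.2)) :
    ∀ p : K × W × K, π (β p) - π p ∈ J := by
  rintro ⟨r, w, s⟩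
  subst hπ hβ
  have hsplit : star s * (r - f b0 w + star t * s) + ρ (w + op s • b0) - (star s * r + ρ w)
      = (ρ (w + op s • b0) - ρ w - star s * ρ b0 * s - f w b0 * s)
        + (f w b0 * s + star (f w b0 * s))
        + star s * (star t + ρ b0) * s := by
    rw [star_mul, hf_skew]
    noncomm_ring
  rw [hsplit]
  exact J.add_mem (J.add_mem
    (pseudoQuadratic_add_smul_sub_mem J ρ f hf_sr hρ_sc hρ_add w b0 s) (htr _))
    (star_mul_star_add_mul_mem J hamp htr hb0 s)

/-- Let `K` be a division ring with involution, `J` an ample additive subgroup of symmetric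
elements containing all traces, `W` a right `K`-vector space with anisotropic
pseudo-quadratic form `ρ : W → K/J` (represented by a lift `ρ : W → K`) and skew-hermitian
form `f`. On `V = K ⊕ W ⊕ K` set `π([r,w,s]) = s* r + ρ(w) + J`. Then for `b₀ ∈ W`, `t ∈ K`
with `ρ(b₀) − t ∈ J`, the map `β : [r,w,s] ↦ [r − f(b₀,w) + t* s, w + b₀ s, s]` preserves
`π` modulo `J`. -/
theorem stmt19 {K : Type*} [DivisionRing K] [StarRing K]
    (J : AddSubgroup K) (h1 : (1 : K) ∈ J) (hsym : ∀ a ∈ J, star a = a)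
    (hamp : ∀ x : K, ∀ a ∈ J, star x * a * x ∈ J)
    (htr : ∀ r : K, r + star r ∈ J)
    {W : Type*} [AddCommGroup W] [Module Kᵐᵒᵖ W]
    (ρ : W → K) (f : W → W → K)
    (hf_addl : ∀ x y z : W, f (x + y) z = f x z + f y z)
    (hf_addr : ∀ x y z : W, f x (y + z) = f x y + f x z)
    (hf_sl : ∀ (lam : K) (x y : W), f (op lam • x) y = star lam * f x y)
    (hf_sr : ∀ (lam : K) (x y : W), f x (op lam • y) = f x y * lam)
    (hf_skew : ∀ x y : W, star (f x y) = - f y x)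
    (hρ_sc : ∀ (lam : K) (x : W), ρ (op lam • x) - star lam * ρ x * lam ∈ J)
    (hρ_add : ∀ x y : W, ρ (x + y) - ρ x - ρ y - f x y ∈ J)
    (haniso : ∀ x : W, ρ x ∈ J → x = 0)
    (π : K × W × K → K) (hπ : π = fun p => star p.2.2 * p.1 + ρ p.2.1)
    (b0 : W) (t : K) (hb0 : ρ b0 - t ∈ J)
    (β : (K × W × K) → (K × W × K))
    (hβ : β = fun p => (p.1 - f b0 p.2.1 + star t * p.2.2, p.2.1 + op p.2.2 • b0, p.2.2)) :
    ∀ p : K × W × K, π (β p) - π p ∈ J :=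
  stmt19_general J hamp htr ρ f hf_sr hf_skew hρ_sc hρ_add π hπ b0 t hb0 β hβ
end
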